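/- Let γ : [0,1] → ℝ² be a regular W^{2,1}-curve (both components in W^{2,1}(0,1) and |γ'| > 0 on [0,1]) whose boundary warp angles θ⁰, θ¹ (the angles between γ'(0), γ'(1) respectively and the chord from γ(0) to γ(1)) lie in [0, π/2). Then for every ε > 0, ε 𝓑[γ] + (1/ε)(𝓛[γ] − 𝓛[γ̄]) ≥ 4(2√2 − √(1+cos θ⁰) − √(1+cos θ¹)), where 𝓛[γ] := ∫₀¹ |γ'(t)| dt is the length, γ̄ is the straight segment from γ(0) to γ(1), and 𝓑[γ] := ∫₀¹ κ_γ(t)² |γ'(t)| dt is the bending energy with κ_γ := |γ'|⁻³ |γ₁'γ₂'' − γ₂'γ₁''|. -/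

import Mathlib

open Real Set MeasureTheory intervalIntegral Filter Topology

/-!
Let `φ(t)` be the angle between `γ'(t)` and the chord, so that `|φ'| = κ |γ'|`. The cross product
of `γ'` with the chord integrates to zero, so `γ'` is parallel to the chord at some `τ`, where
`√(1 + cos φ)` is `0` or `√2`. Since `|(√(1 + cos φ))'| ≤ |φ'| √(1 - cos φ) / 2`, the variation of
`√(1 + cos φ)` on `[0, τ]` and on `[τ, 1]` gives, as `√(1 + cos θⁱ) ≥ √2 / 2`,
`2 (2√2 - √(1 + cos θ⁰) - √(1 + cos θ¹)) ≤ ∫ |φ'| √(1 - cos φ)`.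
On the other hand `2 |φ'| √(1 - cos φ) ≤ ε κ² |γ'| + |γ'| (1 - cos φ) / ε` by AM-GM, and
`∫ |γ'| cos φ` is the length of the chord.
-/

theorem sqrt_two_sub_sqrt_le_abs_sqrt_sub_sqrt {a z : ℝ} (hz : z = 0 ∨ z = 2)
    (ha : 1 / 2 ≤ a) : √2 - √a ≤ |√z - √a| := by
  rcases hz with rfl | rfl
  · rw [sqrt_zero, zero_sub, abs_neg, abs_of_nonneg (sqrt_nonneg a)]
    nlinarith [sqrt_nonneg a, sqrt_nonneg 2, sq_sqrt (zero_le_two : (0 : ℝ) ≤ 2),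
      sq_sqrt (by linarith : 0 ≤ a)]
  · exact le_abs_self _

theorem exists_eq_zero_of_integral_eq_zero {f : ℝ → ℝ} {a b : ℝ} (hab : a ≠ b)
    (hf : ContinuousOn f (uIcc a b)) (h : ∫ t in a..b, f t = 0) : ∃ c ∈ uIoo a b, f c = 0 := by
  obtain ⟨c, hc, hfc⟩ := exists_eq_interval_average hab hf
  exact ⟨c, hc, by rw [hfc, interval_average_eq, h, smul_zero]⟩

/-- `√u` need not be differentiable where `u` vanishes, so the estimate is proved for
`√(u + δ)` and passed to the limit `δ → 0`. -/
theorem two_mul_abs_sqrt_sub_sqrt_le_integral {u u' g : ℝ → ℝ} {a b : ℝ} (hab : a ≤ b)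
    (hu : ∀ t ∈ Icc a b, HasDerivAt u (u' t) t) (hu₀ : ∀ t ∈ Icc a b, 0 ≤ u t)
    (hg₀ : ∀ t ∈ Icc a b, 0 ≤ g t) (hu' : ∀ t ∈ Icc a b, |u' t| ≤ g t * √(u t))
    (hg : IntervalIntegrable g volume a b) :
    2 * |√(u b) - √(u a)| ≤ ∫ t in a..b, g t := by
  have hcont : ContinuousOn u (Icc a b) := fun t ht =>
    (hu t ht).continuousAt.continuousWithinAt
  have hg' : IntegrableOn (fun t => g t / 2) (Icc a b) :=
    ((intervalIntegrable_iff_integrableOn_Icc_of_le hab).1 hg).div_const 2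
  have key : ∀ δ > 0, 2 * |√(u b + δ) - √(u a + δ)| ≤ ∫ t in a..b, g t := by
    intro δ hδ
    have hpos : ∀ t ∈ Icc a b, 0 < u t + δ := fun t ht => by linarith [hu₀ t ht]
    have hderiv : ∀ t ∈ Ioo a b, HasDerivWithinAt (fun t => √(u t + δ))
        (u' t / (2 * √(u t + δ))) (Ioi t) t := fun t ht =>
      (((hu t (Ioo_subset_Icc_self ht)).add_const δ).sqrt
        (hpos t (Ioo_subset_Icc_self ht)).ne').hasDerivWithinAt
    have hbound : ∀ t ∈ Ioo a b, |u' t / (2 * √(u t + δ))| ≤ g t / 2 := by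
      intro t ht
      have ht' := Ioo_subset_Icc_self ht
      have hsqrt : √(u t) ≤ √(u t + δ) := sqrt_le_sqrt (by linarith)
      have hden : 0 < 2 * √(u t + δ) := mul_pos two_pos (sqrt_pos.2 (hpos t ht'))
      rw [abs_div, abs_of_pos hden, div_le_div_iff₀ hden two_pos]
      nlinarith [hu' t ht', hg₀ t ht']
    have hc : ContinuousOn (fun t => √(u t + δ)) (Icc a b) :=
      (hcont.add continuousOn_const).sqrt
    have hupper := sub_le_integral_of_hasDeriv_right_of_le hab hc hderiv hg'
      fun t ht => (le_abs_self _).trans (hbound t ht)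
    have hlower := integral_le_sub_of_hasDeriv_right_of_le (φ := fun t => -(g t / 2))
      hab hc hderiv hg'.neg
      fun t ht => neg_le_of_abs_le (hbound t ht)
    rw [intervalIntegral.integral_div] at hupper
    rw [intervalIntegral.integral_neg, intervalIntegral.integral_div] at hlower
    linarith [abs_le.2 ⟨hlower, hupper⟩]
  have hlim : Tendsto (fun δ => 2 * |√(u b + δ) - √(u a + δ)|) (𝓝[>] 0)
      (𝓝 (2 * |√(u b) - √(u a)|)) := by
    have : Continuous fun δ => 2 * |√(u b + δ) - √(u a + δ)| := by fun_prop
    simpa using (this.continuousWithinAt (s := Ioi 0) (x := 0)).tendsto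
  exact le_of_tendsto hlim (eventually_nhdsWithin_of_forall key)

noncomputable section

namespace PlaneCurve

variable (x y : ℝ → ℝ)

def speed (t : ℝ) : ℝ := √(deriv x t ^ 2 + deriv y t ^ 2)

def chordLength : ℝ := √((x 1 - x 0) ^ 2 + (y 1 - y 0) ^ 2)

def chordDot (t : ℝ) : ℝ := (x 1 - x 0) * deriv x t + (y 1 - y 0) * deriv y t

def chordCross (t : ℝ) : ℝ := (x 1 - x 0) * deriv y t - (y 1 - y 0) * deriv x t

def chordCos (t : ℝ) : ℝ := chordDot x y t / (speed x y t * chordLength x y)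

def crossAccel (t : ℝ) : ℝ := deriv x t * deriv (deriv y) t - deriv y t * deriv (deriv x) t

def turningRate (t : ℝ) : ℝ := |crossAccel x y t| / speed x y t ^ 2

def bendingDensity (t : ℝ) : ℝ := (|crossAccel x y t| / speed x y t ^ 3) ^ 2 * speed x y t

/-- `|φ'| √(1 - cos φ)`, where `φ` is the angle between `γ'` and the chord. -/
def warpDensity (t : ℝ) : ℝ := turningRate x y t * √(1 - chordCos x y t)

variable {x y}

theorem chordLength_sq : chordLength x y ^ 2 = (x 1 - x 0) ^ 2 + (y 1 - y 0) ^ 2 :=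
  sq_sqrt (by positivity)

theorem speed_sq (t : ℝ) : speed x y t ^ 2 = deriv x t ^ 2 + deriv y t ^ 2 :=
  sq_sqrt (by positivity)

theorem chordDot_sq_add_chordCross_sq (t : ℝ) :
    chordDot x y t ^ 2 + chordCross x y t ^ 2 = (chordLength x y * speed x y t) ^ 2 := by
  rw [mul_pow, chordLength_sq, speed_sq, chordDot, chordCross]
  ring

theorem abs_chordCos_le_one (t : ℝ) : |chordCos x y t| ≤ 1 := by
  have h : chordDot x y t ^ 2 ≤ (speed x y t * chordLength x y) ^ 2 := by
    nlinarith [chordDot_sq_add_chordCross_sq (x := x) (y := y) t, sq_nonneg (chordCross x y t)]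
  rw [chordCos, abs_div]
  refine div_le_one_of_le₀ ?_ (abs_nonneg _)
  simpa [abs_of_nonneg (mul_nonneg (sqrt_nonneg _) (sqrt_nonneg _) :
    0 ≤ speed x y t * chordLength x y)] using sq_le_sq.1 h

theorem cos_arccos_chordCos (t : ℝ) : cos (arccos (chordCos x y t)) = chordCos x y t :=
  cos_arccos (abs_le.1 (abs_chordCos_le_one t)).1 (abs_le.1 (abs_chordCos_le_one t)).2

theorem chordLength_pos_of_chordCos_ne_zero {t : ℝ} (h : chordCos x y t ≠ 0) :
    0 < chordLength x y :=
  (sqrt_nonneg _).lt_of_ne' fun hℓ : chordLength x y = 0 =>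
    h (by rw [chordCos, hℓ, mul_zero, div_zero])

theorem chordCos_eq_one_or_neg_one {t : ℝ} (hs : speed x y t ≠ 0) (hℓ : chordLength x y ≠ 0)
    (hq : chordCross x y t = 0) : chordCos x y t = 1 ∨ chordCos x y t = -1 := by
  have h := chordDot_sq_add_chordCross_sq (x := x) (y := y) t
  rw [hq] at h
  apply sq_eq_one_iff.1
  rw [chordCos, div_pow]
  field_simp
  linear_combination h

theorem continuous_speed (hx' : Continuous (deriv x)) (hy' : Continuous (deriv y)) :
    Continuous (speed x y) := by
  unfold speed
  fun_prop

theorem continuous_chordDot (hx' : Continuous (deriv x)) (hy' : Continuous (deriv y)) :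
    Continuous (chordDot x y) := by
  unfold chordDot
  fun_prop

theorem continuous_chordCross (hx' : Continuous (deriv x)) (hy' : Continuous (deriv y)) :
    Continuous (chordCross x y) := by
  unfold chordCross
  fun_prop

theorem integral_chordDot (hx : Differentiable ℝ x) (hy : Differentiable ℝ y)
    (hx' : Continuous (deriv x)) (hy' : Continuous (deriv y)) :
    ∫ t in (0 : ℝ)..1, chordDot x y t = chordLength x y ^ 2 := by
  have hF : ∀ t ∈ uIcc (0 : ℝ) 1,
      HasDerivAt (fun t => (x 1 - x 0) * x t + (y 1 - y 0) * y t) (chordDot x y t) t :=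
    fun t _ => ((hx t).hasDerivAt.const_mul _).add ((hy t).hasDerivAt.const_mul _)
  rw [integral_eq_sub_of_hasDerivAt hF ((continuous_chordDot hx' hy').intervalIntegrable 0 1),
    chordLength_sq]
  ring

theorem integral_chordCross (hx : Differentiable ℝ x) (hy : Differentiable ℝ y)
    (hx' : Continuous (deriv x)) (hy' : Continuous (deriv y)) :
    ∫ t in (0 : ℝ)..1, chordCross x y t = 0 := by
  have hF : ∀ t ∈ uIcc (0 : ℝ) 1,
      HasDerivAt (fun t => (x 1 - x 0) * y t - (y 1 - y 0) * x t) (chordCross x y t) t :=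
    fun t _ => ((hy t).hasDerivAt.const_mul _).sub ((hx t).hasDerivAt.const_mul _)
  rw [integral_eq_sub_of_hasDerivAt hF ((continuous_chordCross hx' hy').intervalIntegrable 0 1)]
  ring

theorem exists_chordCross_eq_zero (hx : Differentiable ℝ x) (hy : Differentiable ℝ y)
    (hx' : Continuous (deriv x)) (hy' : Continuous (deriv y)) :
    ∃ t ∈ Icc (0 : ℝ) 1, chordCross x y t = 0 := by
  obtain ⟨t, ht, h⟩ := exists_eq_zero_of_integral_eq_zero zero_ne_one
    (continuous_chordCross hx' hy').continuousOn (integral_chordCross hx hy hx' hy')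
  rw [uIoo_of_le zero_le_one] at ht
  exact ⟨t, Ioo_subset_Icc_self ht, h⟩

theorem hasDerivAt_speed {t : ℝ} (hx' : DifferentiableAt ℝ (deriv x) t)
    (hy' : DifferentiableAt ℝ (deriv y) t) (hs : speed x y t ≠ 0) :
    HasDerivAt (speed x y)
      ((deriv x t * deriv (deriv x) t + deriv y t * deriv (deriv y) t) / speed x y t) t := by
  have hsq : HasDerivAt (fun t => deriv x t ^ 2 + deriv y t ^ 2)
      (2 * (deriv x t * deriv (deriv x) t + deriv y t * deriv (deriv y) t)) t :=
    ((hx'.hasDerivAt.pow 2).add (hy'.hasDerivAt.pow 2)).congr_deriv (by norm_num; ring)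
  refine (hsq.sqrt fun h0 => hs ?_).congr_deriv ?_
  · rw [speed, h0, sqrt_zero]
  · rw [← speed]
    field_simp

theorem hasDerivAt_chordCos {t : ℝ} (hx' : DifferentiableAt ℝ (deriv x) t)
    (hy' : DifferentiableAt ℝ (deriv y) t) (hs : speed x y t ≠ 0) :
    HasDerivAt (chordCos x y)
      (-(crossAccel x y t * chordCross x y t) / (chordLength x y * speed x y t ^ 3)) t := by
  have hp : HasDerivAt (chordDot x y)
      ((x 1 - x 0) * deriv (deriv x) t + (y 1 - y 0) * deriv (deriv y) t) t :=
    (hx'.hasDerivAt.const_mul _).add (hy'.hasDerivAt.const_mul _)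
  have hc : chordCos x y = fun t => chordDot x y t / speed x y t / chordLength x y := by
    funext t
    rw [chordCos, div_div]
  rw [hc]
  refine ((hp.div (hasDerivAt_speed hx' hy' hs) hs).div_const _).congr_deriv ?_
  have h2 := speed_sq (x := x) (y := y) t
  rcases eq_or_ne (chordLength x y) 0 with hℓ | hℓ
  · simp [hℓ]
  field_simp
  rw [crossAccel, chordCross, chordDot]
  linear_combination ((x 1 - x 0) * deriv (deriv x) t + (y 1 - y 0) * deriv (deriv y) t) * h2

theorem abs_deriv_chordCos_eq {t : ℝ} (hs : 0 < speed x y t) (hℓ : 0 < chordLength x y) :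
    |-(crossAccel x y t * chordCross x y t) / (chordLength x y * speed x y t ^ 3)| =
      warpDensity x y t * √(1 + chordCos x y t) := by
  have hc := abs_le.1 (abs_chordCos_le_one (x := x) (y := y) t)
  have h1 : (1 - chordCos x y t) * (1 + chordCos x y t) =
      (chordCross x y t / (chordLength x y * speed x y t)) ^ 2 := by
    have h := chordDot_sq_add_chordCross_sq (x := x) (y := y) t
    rw [chordCos]
    field_simp
    linear_combination -h
  rw [warpDensity, turningRate, mul_assoc, ← sqrt_mul (by linarith), h1, sqrt_sq_eq_abs,
    abs_div, abs_div, abs_neg, abs_mul,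
    abs_of_pos (by positivity : 0 < chordLength x y * speed x y t),
    abs_of_pos (by positivity : 0 < chordLength x y * speed x y t ^ 3)]
  field_simp

theorem two_mul_warpDensity_le {ε t : ℝ} (hε : 0 < ε) (hs : 0 < speed x y t) :
    2 * warpDensity x y t ≤
      ε * bendingDensity x y t + (speed x y t - chordDot x y t / chordLength x y) / ε := by
  have hc := (abs_le.1 (abs_chordCos_le_one (x := x) (y := y) t)).2
  have h := two_mul_le_add_mul_sq (a := turningRate x y t) (b := √(1 - chordCos x y t))
    (div_pos hε hs)
  rw [sq_sqrt (by linarith)] at h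
  calc 2 * warpDensity x y t = 2 * turningRate x y t * √(1 - chordCos x y t) := by
        rw [warpDensity, mul_assoc]
    _ ≤ _ := h
    _ = _ := by
      rw [bendingDensity, turningRate, chordCos]
      field_simp

theorem measurable_warpDensity (hx' : Continuous (deriv x)) (hy' : Continuous (deriv y)) :
    Measurable (warpDensity x y) := by
  have hx'' := measurable_deriv (deriv x)
  have hy'' := measurable_deriv (deriv y)
  have hp := (continuous_chordDot hx' hy').measurable
  have hs := (continuous_speed hx' hy').measurable
  unfold warpDensity turningRate chordCos crossAccel
  fun_prop

theorem intervalIntegrable_warpDensity (hx' : Continuous (deriv x)) (hy' : Continuous (deriv y))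
    (hs : ∀ t ∈ Icc (0 : ℝ) 1, 0 < speed x y t)
    (hρ : IntervalIntegrable (bendingDensity x y) volume 0 1) :
    IntervalIntegrable (warpDensity x y) volume 0 1 := by
  have hbound : IntervalIntegrable
      (fun t => (bendingDensity x y t + (speed x y t - chordDot x y t / chordLength x y)) / 2)
      volume 0 1 :=
    (hρ.add (((continuous_speed hx' hy').sub
      ((continuous_chordDot hx' hy').div_const _)).intervalIntegrable 0 1)).div_const 2
  refine hbound.mono_fun (measurable_warpDensity hx' hy').aestronglyMeasurable.restrict ?_
  rw [uIoc_of_le zero_le_one]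
  refine (ae_restrict_iff' measurableSet_Ioc).2 (ae_of_all _ fun t ht => ?_)
  have ht' := hs t (Ioc_subset_Icc_self ht)
  have h := two_mul_warpDensity_le (x := x) (y := y) one_pos ht'
  have h₀ : 0 ≤ warpDensity x y t := by unfold warpDensity turningRate; positivity
  change ‖warpDensity x y t‖ ≤ ‖_‖
  rw [Real.norm_of_nonneg h₀, Real.norm_of_nonneg (by linarith)]
  linarith

theorem two_mul_integral_warpDensity_le {ε : ℝ} (hx : Differentiable ℝ x)
    (hy : Differentiable ℝ y) (hx' : Continuous (deriv x)) (hy' : Continuous (deriv y))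
    (hs : ∀ t ∈ Icc (0 : ℝ) 1, 0 < speed x y t)
    (hρ : IntervalIntegrable (bendingDensity x y) volume 0 1) (hε : 0 < ε) :
    2 * ∫ t in (0 : ℝ)..1, warpDensity x y t ≤
      ε * (∫ t in (0 : ℝ)..1, bendingDensity x y t) +
        ((∫ t in (0 : ℝ)..1, speed x y t) - chordLength x y) / ε := by
  have hsi := (continuous_speed hx' hy').intervalIntegrable (μ := volume) 0 1
  have hpi := ((continuous_chordDot hx' hy').div_const (chordLength x y)).intervalIntegrable
    (μ := volume) 0 1
  have hℓ : chordLength x y ^ 2 / chordLength x y = chordLength x y := by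
    rcases eq_or_ne (chordLength x y) 0 with h | h
    · simp [h]
    · field_simp
  calc 2 * ∫ t in (0 : ℝ)..1, warpDensity x y t
      = ∫ t in (0 : ℝ)..1, 2 * warpDensity x y t :=
        (intervalIntegral.integral_const_mul _ _).symm
    _ ≤ ∫ t in (0 : ℝ)..1, (ε * bendingDensity x y t +
          (speed x y t - chordDot x y t / chordLength x y) / ε) :=
      intervalIntegral.integral_mono_on zero_le_one
        ((intervalIntegrable_warpDensity hx' hy' hs hρ).const_mul 2)
        ((hρ.const_mul ε).add ((hsi.sub hpi).div_const ε))
        fun t ht => two_mul_warpDensity_le hε (hs t ht)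
    _ = _ := by
      rw [intervalIntegral.integral_add (hρ.const_mul ε) ((hsi.sub hpi).div_const ε),
        intervalIntegral.integral_const_mul, intervalIntegral.integral_div,
        intervalIntegral.integral_sub hsi hpi, intervalIntegral.integral_div,
        integral_chordDot hx hy hx' hy', hℓ]

theorem two_mul_abs_sqrt_one_add_chordCos_sub_le_integral {a b : ℝ} (hab : a ≤ b)
    (hx' : Differentiable ℝ (deriv x)) (hy' : Differentiable ℝ (deriv y))
    (hs : ∀ t ∈ Icc a b, 0 < speed x y t) (hℓ : 0 < chordLength x y)
    (hψ : IntervalIntegrable (warpDensity x y) volume a b) :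
    2 * |√(1 + chordCos x y b) - √(1 + chordCos x y a)| ≤ ∫ t in a..b, warpDensity x y t := by
  refine two_mul_abs_sqrt_sub_sqrt_le_integral hab
    (fun t ht => ((hasDerivAt_chordCos (hx' t) (hy' t) (hs t ht).ne').const_add 1))
    (fun t _ => by linarith [(abs_le.1 (abs_chordCos_le_one (x := x) (y := y) t)).1])
    (fun t _ => by unfold warpDensity turningRate; positivity)
    (fun t ht => (abs_deriv_chordCos_eq (hs t ht) hℓ).le) hψ

theorem two_mul_sub_le_integral_warpDensity (hx : Differentiable ℝ x) (hy : Differentiable ℝ y)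
    (hx' : Differentiable ℝ (deriv x)) (hy' : Differentiable ℝ (deriv y))
    (hs : ∀ t ∈ Icc (0 : ℝ) 1, 0 < speed x y t) (hℓ : 0 < chordLength x y)
    (hψ : IntervalIntegrable (warpDensity x y) volume 0 1)
    (h₀ : -1 / 2 ≤ chordCos x y 0) (h₁ : -1 / 2 ≤ chordCos x y 1) :
    2 * (2 * √2 - √(1 + chordCos x y 0) - √(1 + chordCos x y 1)) ≤
      ∫ t in (0 : ℝ)..1, warpDensity x y t := by
  obtain ⟨τ, hτ, hq⟩ := exists_chordCross_eq_zero hx hy hx'.continuous hy'.continuous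
  have hτ' : 1 + chordCos x y τ = 0 ∨ 1 + chordCos x y τ = 2 := by
    rcases chordCos_eq_one_or_neg_one (hs τ hτ).ne' hℓ.ne' hq with h | h
    · exact Or.inr (by linarith)
    · exact Or.inl (by linarith)
  have hψ₀ : IntervalIntegrable (warpDensity x y) volume 0 τ :=
    hψ.mono_set <| by
      rw [uIcc_of_le hτ.1, uIcc_of_le zero_le_one]
      exact Icc_subset_Icc le_rfl hτ.2
  have hψ₁ : IntervalIntegrable (warpDensity x y) volume τ 1 :=
    hψ.mono_set <| by
      rw [uIcc_of_le hτ.2, uIcc_of_le zero_le_one]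
      exact Icc_subset_Icc hτ.1 le_rfl
  have hv₀ := two_mul_abs_sqrt_one_add_chordCos_sub_le_integral hτ.1 hx' hy'
    (fun t ht => hs t (Icc_subset_Icc le_rfl hτ.2 ht)) hℓ hψ₀
  have hv₁ := two_mul_abs_sqrt_one_add_chordCos_sub_le_integral hτ.2 hx' hy'
    (fun t ht => hs t (Icc_subset_Icc hτ.1 le_rfl ht)) hℓ hψ₁
  have he₀ := sqrt_two_sub_sqrt_le_abs_sqrt_sub_sqrt hτ' (a := 1 + chordCos x y 0) (by linarith)
  have he₁ := sqrt_two_sub_sqrt_le_abs_sqrt_sub_sqrt hτ' (a := 1 + chordCos x y 1) (by linarith)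
  rw [abs_sub_comm] at he₁
  rw [← integral_add_adjacent_intervals hψ₀ hψ₁]
  linarith

end PlaneCurve

end

open PlaneCurve

theorem curve_lower_bound
    (ε : ℝ) (hε : 0 < ε)
    (γ₁ γ₂ : ℝ → ℝ)
    (hγ₁ : ∀ t, DifferentiableAt ℝ γ₁ t) (hγ₁' : ∀ t, DifferentiableAt ℝ (deriv γ₁) t)
    (hγ₂ : ∀ t, DifferentiableAt ℝ γ₂ t) (hγ₂' : ∀ t, DifferentiableAt ℝ (deriv γ₂) t)
    -- regularity: |γ'| > 0 on [0,1]
    (hreg : ∀ t ∈ Icc (0:ℝ) 1, 0 < Real.sqrt ((deriv γ₁ t) ^ 2 + (deriv γ₂ t) ^ 2))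
    -- chord, length, bending energy
    (chord : ℝ) (hchord : chord = Real.sqrt ((γ₁ 1 - γ₁ 0) ^ 2 + (γ₂ 1 - γ₂ 0) ^ 2))
    (len : ℝ) (hlen : len = ∫ t in (0:ℝ)..1, Real.sqrt ((deriv γ₁ t) ^ 2 + (deriv γ₂ t) ^ 2))
    (bend : ℝ) (hbend : bend = ∫ t in (0:ℝ)..1,
      (|deriv γ₁ t * deriv (deriv γ₂) t - deriv γ₂ t * deriv (deriv γ₁) t| /
        Real.sqrt ((deriv γ₁ t) ^ 2 + (deriv γ₂ t) ^ 2) ^ 3) ^ 2 *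
      Real.sqrt ((deriv γ₁ t) ^ 2 + (deriv γ₂ t) ^ 2))
    (hbendint : IntervalIntegrable (fun t =>
      (|deriv γ₁ t * deriv (deriv γ₂) t - deriv γ₂ t * deriv (deriv γ₁) t| /
        Real.sqrt ((deriv γ₁ t) ^ 2 + (deriv γ₂ t) ^ 2) ^ 3) ^ 2 *
      Real.sqrt ((deriv γ₁ t) ^ 2 + (deriv γ₂ t) ^ 2)) volume 0 1)
    -- boundary warp angles
    (θ0 θ1 : ℝ)
    (hθ0 : θ0 = Real.arccos
      (((γ₁ 1 - γ₁ 0) * deriv γ₁ 0 + (γ₂ 1 - γ₂ 0) * deriv γ₂ 0) /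
        (Real.sqrt ((deriv γ₁ 0) ^ 2 + (deriv γ₂ 0) ^ 2) * chord)))
    (hθ1 : θ1 = Real.arccos
      (((γ₁ 1 - γ₁ 0) * deriv γ₁ 1 + (γ₂ 1 - γ₂ 0) * deriv γ₂ 1) /
        (Real.sqrt ((deriv γ₁ 1) ^ 2 + (deriv γ₂ 1) ^ 2) * chord)))
    (hθ0lt : θ0 < π / 2) (hθ1lt : θ1 < π / 2) :
    ε * bend + (1/ε) * (len - chord) ≥
      4 * (2 * Real.sqrt 2 - Real.sqrt (1 + Real.cos θ0) - Real.sqrt (1 + Real.cos θ1)) := by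
  obtain rfl : chord = chordLength γ₁ γ₂ := hchord
  obtain rfl : len = ∫ t in (0 : ℝ)..1, speed γ₁ γ₂ t := hlen
  obtain rfl : bend = ∫ t in (0 : ℝ)..1, bendingDensity γ₁ γ₂ t := hbend
  have hx' := Differentiable.continuous hγ₁'
  have hy' := Differentiable.continuous hγ₂'
  have hc₀ : 0 < chordCos γ₁ γ₂ 0 := arccos_lt_pi_div_two.1 (hθ0 ▸ hθ0lt)
  have hc₁ : 0 < chordCos γ₁ γ₂ 1 := arccos_lt_pi_div_two.1 (hθ1 ▸ hθ1lt)
  have hℓ := chordLength_pos_of_chordCos_ne_zero hc₀.ne'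
  have hψ := intervalIntegrable_warpDensity hx' hy' hreg hbendint
  have hlower := two_mul_sub_le_integral_warpDensity hγ₁ hγ₂ hγ₁' hγ₂' hreg hℓ hψ
    (by linarith) (by linarith)
  have hupper := two_mul_integral_warpDensity_le hγ₁ hγ₂ hx' hy' hreg hbendint hε
  have hcos₀ : cos θ0 = chordCos γ₁ γ₂ 0 := by rw [hθ0]; exact cos_arccos_chordCos 0
  have hcos₁ : cos θ1 = chordCos γ₁ γ₂ 1 := by rw [hθ1]; exact cos_arccos_chordCos 1
  rw [hcos₀, hcos₁, one_div_mul_eq_div]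
  linarith
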